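/- For integers p > q > 0, the toric diagram 𝒴^{p,q} is not a parallelogram and admits no Minkowski decomposition 𝒴^{p,q} = A + B into two lattice polytopes with neither A nor B a single point; in particular, 𝒴^{p,q} admits no lattice maximal Minkowski decomposition. -/

import Mathlib

open Set Pointwise

noncomputable section

/-- We work in the plane `ℝ × ℝ`. -/
abbrev V : Type := ℝ × ℝ

/-- The embedding of the lattice `ℤ × ℤ` into the plane. -/
def toR (p : ℤ × ℤ) : V := ((p.1 : ℝ), (p.2 : ℝ))

/-- The set of lattice points of the plane. -/
def latticePoints : Set V := Set.range toR

/-- A lattice polytope: the convex hull of a nonempty finite set of lattice points. -/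
def IsLatticePolytope (P : Set V) : Prop :=
  ∃ S : Finset (ℤ × ℤ), S.Nonempty ∧ P = convexHull ℝ (toR '' ↑S)

/-- A toric diagram: a two-dimensional lattice polytope such that every lattice point on its
topological boundary is an extreme point. -/
def IsToricDiagram (P : Set V) : Prop :=
  IsLatticePolytope P ∧ (interior P).Nonempty ∧
    ∀ x ∈ frontier P, x ∈ latticePoints → x ∈ P.extremePoints ℝ

/-- A lattice segment: the convex hull of two distinct lattice points. -/
def IsLatticeSegment (L : Set V) : Prop :=
  ∃ a b : ℤ × ℤ, a ≠ b ∧ L = segment ℝ (toR a) (toR b)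

/-- A lattice triangle: the convex hull of three affinely independent lattice points. -/
def IsLatticeTriangle (T : Set V) : Prop :=
  ∃ a b c : ℤ × ℤ, AffineIndependent ℝ ![toR a, toR b, toR c] ∧
    T = convexHull ℝ {toR a, toR b, toR c}

/-- `E` is an edge of `P`: a maximal (nondegenerate) line segment contained in the
topological boundary of `P`. -/
def IsEdge (P E : Set V) : Prop :=
  (∃ a b : V, a ≠ b ∧ E = segment ℝ a b) ∧ E ⊆ frontier P ∧
    ∀ F : Set V, (∃ a b : V, F = segment ℝ a b) → F ⊆ frontier P → E ⊆ F → F = E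

/-- `v` is an edge vector of `P` (the difference of the endpoints of some edge of `P`). -/
def IsEdgeVector (P : Set V) (v : V) : Prop :=
  ∃ a b : V, a ≠ b ∧ IsEdge P (segment ℝ a b) ∧ v = b - a

/-- Two plane vectors are parallel when their cross product vanishes. -/
def Par (v w : V) : Prop := v.1 * w.2 = v.2 * w.1

/-- `P` admits a lattice maximal Minkowski decomposition: `P` is a Minkowski sum of at
least two lattice polytopes, each of which is a lattice segment or a lattice triangle. -/
def HasLatticeMaximalDecomposition (P : Set V) : Prop :=
  ∃ (m : ℕ) (Ps : Fin (m + 1) → Set V), 1 ≤ m ∧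
    P = ∑ k, Ps k ∧ ∀ k, IsLatticeSegment (Ps k) ∨ IsLatticeTriangle (Ps k)

/-- A convex polytope: the convex hull of a nonempty finite set of points. -/
def IsConvexPolytope (A : Set V) : Prop :=
  ∃ S : Finset V, S.Nonempty ∧ A = convexHull ℝ (↑S : Set V)

/-- `A` is a homothet `λ • P + t` (`λ > 0`) of `P`. -/
def IsHomothet (A P : Set V) : Prop :=
  ∃ (l : ℝ) (t : V), 0 < l ∧ A = (fun x => l • x + t) '' P

/-- A (nondegenerate) line segment. -/
def IsSegmentSet (A : Set V) : Prop := ∃ a b : V, a ≠ b ∧ A = segment ℝ a b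

/-- A triangle: the convex hull of three affinely independent points. -/
def IsTriangleSet (A : Set V) : Prop :=
  ∃ a b c : V, AffineIndependent ℝ ![a, b, c] ∧ A = convexHull ℝ {a, b, c}

/-- A convex polytope is Minkowski-indecomposable if in every Minkowski decomposition
into two convex polytopes, one of the summands is a point or a homothet of the polytope. -/
def MinkowskiIndecomposable (Q : Set V) : Prop :=
  ∀ A B : Set V, IsConvexPolytope A → IsConvexPolytope B → Q = A + B →
    (∃ x, A = {x}) ∨ IsHomothet A Q ∨ (∃ x, B = {x}) ∨ IsHomothet B Q

/-- A parallelogram: a quadrilateral whose vertices `v₁ v₂ v₃ v₄` in cyclic order satisfy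
`v₁ + v₃ = v₂ + v₄`. -/
def IsParallelogram (P : Set V) : Prop :=
  ∃ w : Fin 4 → V, Function.Injective w ∧ P.extremePoints ℝ = Set.range w ∧
    w 0 + w 2 = w 1 + w 3

/-- The Gauntlett–Martelli–Sparks–Waldram toric diagram `𝒴^{p,q}`. -/
def GMSW (p q : ℤ) : Set V :=
  convexHull ℝ (toR '' ({(0, 0), (1, 0), (p, p), (p - q - 1, p - q)} : Set (ℤ × ℤ)))

/-- Cross product of lattice vectors. -/
def crossZ (u w : ℤ × ℤ) : ℤ := u.1 * w.2 - u.2 * w.1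


/-!
All four edges of `𝒴^{p,q}` are primitive lattice vectors. Suppose `𝒴^{p,q} = conv S + conv T`
for finite sets of lattice points `S`, `T`. Each vertex `A i` is then a sum `s i + t i` of points
of `S` and `T` maximizing the outer normals of both edges at `A i`. Along the edge from `A i` to
`A (i + 1)` the differences `s (i + 1) - s i` and `t (i + 1) - t i` are nonnegative multiples of
the primitive edge vector adding up to it, so exactly one of them is zero. No proper nonempty set
of edges of `𝒴^{p,q}` sums to zero (it is not a parallelogram), so one of the two summands stays
at the same point all the way around; as the outer normals sum to zero, that summand is a point.
-/

def dotZ (n u : ℤ × ℤ) : ℤ := n.1 * u.1 + n.2 * u.2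

lemma dotZ_add_left (m n u : ℤ × ℤ) : dotZ (m + n) u = dotZ m u + dotZ n u := by
  simp only [dotZ, Prod.fst_add, Prod.snd_add]; ring

lemma dotZ_add_right (n u v : ℤ × ℤ) : dotZ n (u + v) = dotZ n u + dotZ n v := by
  simp only [dotZ, Prod.fst_add, Prod.snd_add]; ring

lemma dotZ_sub_right (n u v : ℤ × ℤ) : dotZ n (u - v) = dotZ n u - dotZ n v := by
  simp only [dotZ, Prod.fst_sub, Prod.snd_sub]; ring

lemma eq_of_dotZ_eq_of_crossZ_ne_zero {m n u v : ℤ × ℤ} (hm : dotZ m u = dotZ m v)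
    (hn : dotZ n u = dotZ n v) (hmn : crossZ m n ≠ 0) : u = v := by
  simp only [dotZ, crossZ] at hm hn hmn
  have h1 : (u.1 - v.1) * (m.1 * n.2 - m.2 * n.1) = 0 := by linear_combination n.2 * hm - m.2 * hn
  have h2 : (u.2 - v.2) * (m.1 * n.2 - m.2 * n.1) = 0 := by linear_combination m.1 * hn - n.1 * hm
  exact Prod.ext (by simpa [sub_eq_zero, hmn] using h1) (by simpa [sub_eq_zero, hmn] using h2)

/-- As `dotZ g e = 1`, the vector `e` is primitive, so `δ` parallel to `e` is `k • e` with
`k : ℤ`; the sign conditions against `m` force `k ∈ {0, 1}`. -/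
lemma eq_zero_or_eq_zero_of_add_eq_primitive {δ ε e g m : ℤ × ℤ} (hsum : δ + ε = e)
    (hg : dotZ g e = 1) (hpar : crossZ δ e = 0) (hm : dotZ m e < 0) (hmδ : dotZ m δ ≤ 0)
    (hmε : dotZ m ε ≤ 0) : δ = 0 ∨ ε = 0 := by
  set k := dotZ g δ
  have hδ : δ = (k * e.1, k * e.2) := by
    simp only [k, dotZ, crossZ] at hg hpar ⊢
    ext
    · linear_combination (-δ.1) * hg + g.2 * hpar
    · linear_combination (-δ.2) * hg - g.1 * hpar
  have hε : ε = ((1 - k) * e.1, (1 - k) * e.2) := by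
    rw [eq_sub_of_add_eq' hsum, hδ]; ext <;> simp <;> ring
  have hmδ' : k * dotZ m e ≤ 0 := by rw [hδ] at hmδ; simp only [dotZ] at hmδ ⊢; linarith
  have hmε' : (1 - k) * dotZ m e ≤ 0 := by rw [hε] at hmε; simp only [dotZ] at hmε ⊢; linarith
  have hk : k = 0 ∨ k = 1 := by
    have : 0 ≤ k := by nlinarith
    have : k ≤ 1 := by nlinarith
    omega
  rcases hk with hk | hk
  · left; rw [hδ, hk]; simp
  · right; rw [hε, hk]; simp

lemma toR_add (u v : ℤ × ℤ) : toR (u + v) = toR u + toR v := by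
  simp [toR]

lemma toR_injective : Function.Injective toR := by
  intro u v h
  simp only [toR, Prod.mk.injEq, Int.cast_inj] at h
  exact Prod.ext h.1 h.2

def toRAddHom : ℤ × ℤ →+ V := AddMonoidHom.mk' toR toR_add

def pairing (n : ℤ × ℤ) : V →ₗ[ℝ] ℝ :=
  (n.1 : ℝ) • LinearMap.fst ℝ ℝ ℝ + (n.2 : ℝ) • LinearMap.snd ℝ ℝ ℝ

@[simp] lemma pairing_toR (n u : ℤ × ℤ) : pairing n (toR u) = dotZ n u := by
  simp [pairing, toR, dotZ]

def latticeHull (X : Set (ℤ × ℤ)) : Set V := convexHull ℝ (toR '' X)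

lemma toR_mem_latticeHull {X : Set (ℤ × ℤ)} {u : ℤ × ℤ} (hu : u ∈ X) : toR u ∈ latticeHull X :=
  subset_convexHull ℝ _ (mem_image_of_mem toR hu)

lemma latticeHull_add (X Y : Set (ℤ × ℤ)) :
    latticeHull (X + Y) = latticeHull X + latticeHull Y := by
  rw [latticeHull, show toR = toRAddHom from rfl, image_add, convexHull_add]; rfl

lemma latticeHull_singleton (u : ℤ × ℤ) : latticeHull {u} = {toR u} := by
  rw [latticeHull, image_singleton, convexHull_singleton]

lemma pairing_le_of_mem_latticeHull {X : Set (ℤ × ℤ)} {n x : ℤ × ℤ} (hx : IsMaxOn (dotZ n) X x)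
    {z : V} (hz : z ∈ latticeHull X) : pairing n z ≤ dotZ n x := by
  obtain ⟨_, ⟨u, hu, rfl⟩, hzu⟩ :=
    ((pairing n).convexOn (convex_convexHull ℝ _)).exists_ge_of_mem_convexHull
      (subset_convexHull ℝ _) hz
  rw [pairing_toR] at hzu
  exact hzu.trans (by exact_mod_cast isMaxOn_iff.1 hx u hu)

lemma dotZ_le_of_toR_mem_latticeHull {X : Set (ℤ × ℤ)} {n x u : ℤ × ℤ} (hx : IsMaxOn (dotZ n) X x)
    (hu : toR u ∈ latticeHull X) : dotZ n u ≤ dotZ n x := by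
  exact_mod_cast pairing_toR n u ▸ pairing_le_of_mem_latticeHull hx hu

lemma eq_of_mem_convexHull_of_forall_lt {E : Type*} [AddCommGroup E] [Module ℝ E]
    (f : E →ₗ[ℝ] ℝ) {s : Set E} {x z : E} (hs : ∀ y ∈ s, y ≠ x → f y < f x)
    (hz : z ∈ convexHull ℝ s) (hxz : f x ≤ f z) : z = x := by
  have hz' := convexHull_mono (subset_insert_sdiff_singleton x s) hz
  rcases (s \ {x}).eq_empty_or_nonempty with hempty | hne
  · rwa [hempty, insert_empty_eq, convexHull_singleton] at hz'
  rw [convexHull_insert hne, mem_convexJoin] at hz'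
  obtain ⟨x', hx', w, hw, hzxw⟩ := hz'
  rw [mem_singleton_iff.1 hx'] at hzxw
  obtain ⟨a, b, ha, hb, hab, rfl⟩ := hzxw
  obtain ⟨y, ⟨hys, hyx⟩, hwy⟩ :=
    (f.convexOn (convex_convexHull ℝ _)).exists_ge_of_mem_convexHull (subset_convexHull ℝ _) hw
  have hfw : f w < f x := hwy.trans_lt (hs y hys hyx)
  have hb0 : b = 0 := by
    rw [map_add, map_smul, map_smul, smul_eq_mul, smul_eq_mul, ← sub_eq_of_eq_add' hab.symm] at hxz
    nlinarith [mul_nonneg hb (sub_pos.2 hfw).le]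
  rw [hb0, add_zero] at hab
  simp [hab, hb0]

lemma eq_toR_of_mem_latticeHull {W : Set (ℤ × ℤ)} {n a : ℤ × ℤ}
    (hstrict : ∀ w ∈ W, w ≠ a → dotZ n w < dotZ n a) {z : V} (hz : z ∈ latticeHull W)
    (hle : (dotZ n a : ℝ) ≤ pairing n z) : z = toR a := by
  refine eq_of_mem_convexHull_of_forall_lt (pairing n) ?_ hz (by rwa [pairing_toR])
  rintro _ ⟨w, hw, rfl⟩ hne
  simpa using hstrict w hw (ne_of_apply_ne toR hne)

lemma isMaxOn_left_of_add_eq {S T W : Set (ℤ × ℤ)} (hP : latticeHull (S + T) = latticeHull W)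
    {n s t a : ℤ × ℤ} (ht : t ∈ T) (hst : s + t = a) (ha : IsMaxOn (dotZ n) W a) :
    IsMaxOn (dotZ n) S s := by
  refine isMaxOn_iff.2 fun u hu => ?_
  have := dotZ_le_of_toR_mem_latticeHull ha (hP ▸ toR_mem_latticeHull (add_mem_add hu ht))
  rw [← hst, dotZ_add_right, dotZ_add_right] at this
  linarith

lemma exists_add_eq_of_forall_lt {S T : Finset (ℤ × ℤ)} {W : Set (ℤ × ℤ)} (hS : S.Nonempty)
    (hT : T.Nonempty) (hP : latticeHull (↑S + ↑T) = latticeHull W) {n a : ℤ × ℤ} (ha : a ∈ W)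
    (hstrict : ∀ w ∈ W, w ≠ a → dotZ n w < dotZ n a) : ∃ s ∈ S, ∃ t ∈ T, s + t = a := by
  obtain ⟨s, hs, hsmax⟩ := S.exists_max_image (dotZ n) hS
  obtain ⟨t, ht, htmax⟩ := T.exists_max_image (dotZ n) hT
  have hmax : IsMaxOn (dotZ n) (↑S + ↑T) (s + t) := by
    refine isMaxOn_iff.2 ?_
    rintro _ ⟨u, hu, v, hv, rfl⟩
    rw [dotZ_add_right, dotZ_add_right]
    exact add_le_add (hsmax u hu) (htmax v hv)
  have hle := dotZ_le_of_toR_mem_latticeHull hmax (hP ▸ toR_mem_latticeHull ha)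
  have hst := eq_toR_of_mem_latticeHull hstrict
    (hP ▸ toR_mem_latticeHull (add_mem_add (Finset.mem_coe.2 hs) (Finset.mem_coe.2 ht)))
    (by rw [pairing_toR]; exact_mod_cast hle)
  exact ⟨s, hs, t, ht, toR_injective hst⟩

def edgeNormal (A : Fin 4 → ℤ × ℤ) (i : Fin 4) : ℤ × ℤ :=
  ((A (i + 1) - A i).2, -(A (i + 1) - A i).1)

lemma dotZ_edgeNormal_eq_crossZ (A : Fin 4 → ℤ × ℤ) (i : Fin 4) (u : ℤ × ℤ) :
    dotZ (edgeNormal A i) u = crossZ u (A (i + 1) - A i) := by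
  simp only [edgeNormal, dotZ, crossZ]; ring

lemma dotZ_edgeNormal_succ (A : Fin 4 → ℤ × ℤ) (i : Fin 4) :
    dotZ (edgeNormal A i) (A (i + 1)) = dotZ (edgeNormal A i) (A i) := by
  simp only [edgeNormal, dotZ, Prod.fst_sub, Prod.snd_sub]; ring

/-- `A` lists the vertices of a strictly convex quadrilateral counterclockwise, so that
`edgeNormal A i` is the outer normal of the edge from `A i` to `A (i + 1)`. -/
def IsConvexQuadrilateral (A : Fin 4 → ℤ × ℤ) : Prop :=
  ∀ i j, j ≠ i → j ≠ i + 1 → dotZ (edgeNormal A i) (A j) < dotZ (edgeNormal A i) (A i)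

def HasPrimitiveEdges (A : Fin 4 → ℤ × ℤ) : Prop :=
  ∀ i, ∃ g, dotZ g (A (i + 1) - A i) = 1

namespace IsConvexQuadrilateral

variable {A : Fin 4 → ℤ × ℤ}

lemma isMaxOn (hA : IsConvexQuadrilateral A) (i : Fin 4) :
    IsMaxOn (dotZ (edgeNormal A i)) (range A) (A i) := by
  refine isMaxOn_iff.2 ?_
  rintro _ ⟨j, rfl⟩
  by_cases hji : j = i
  · rw [hji]
  by_cases hj : j = i + 1
  · rw [hj, dotZ_edgeNormal_succ]
  · exact (hA i j hji hj).le

lemma isMaxOn_succ (hA : IsConvexQuadrilateral A) (i : Fin 4) :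
    IsMaxOn (dotZ (edgeNormal A i)) (range A) (A (i + 1)) := by
  simpa only [IsMaxOn, IsMaxFilter, dotZ_edgeNormal_succ] using hA.isMaxOn i

lemma isMaxOn_pred (hA : IsConvexQuadrilateral A) (i : Fin 4) :
    IsMaxOn (dotZ (edgeNormal A (i - 1))) (range A) (A i) := by
  simpa only [sub_add_cancel] using hA.isMaxOn_succ (i - 1)

lemma dotZ_edgeNormal_pred_lt (hA : IsConvexQuadrilateral A) (i : Fin 4) :
    dotZ (edgeNormal A (i - 1)) (A (i + 1) - A i) < 0 := by
  have := hA (i - 1) (i + 1) ((by decide : ∀ i : Fin 4, i + 1 ≠ i - 1) i) (by simp)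
  rw [← dotZ_edgeNormal_succ, sub_add_cancel] at this
  rw [dotZ_sub_right]
  linarith

lemma dotZ_lt_of_ne (hA : IsConvexQuadrilateral A) (i : Fin 4) :
    ∀ w ∈ range A, w ≠ A i →
      dotZ (edgeNormal A (i - 1) + edgeNormal A i) w <
        dotZ (edgeNormal A (i - 1) + edgeNormal A i) (A i) := by
  rintro _ ⟨j, rfl⟩ hne
  have hji : j ≠ i := fun h => hne (h ▸ rfl)
  have h₁ := isMaxOn_iff.1 (hA.isMaxOn_pred i) _ (mem_range_self j)
  have h₂ := isMaxOn_iff.1 (hA.isMaxOn i) _ (mem_range_self j)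
  rw [dotZ_add_left, dotZ_add_left]
  by_cases hj : j = i + 1
  · subst hj
    have := hA.dotZ_edgeNormal_pred_lt i
    rw [dotZ_sub_right] at this
    linarith
  · linarith [hA i j hji hj]

lemma injective (hA : IsConvexQuadrilateral A) : Function.Injective A := by
  intro i j hij
  by_contra hne
  by_cases hj : j = i + 1
  · subst hj
    have := hA i (i + 2) ((by decide : ∀ i : Fin 4, i + 2 ≠ i) i)
      ((by decide : ∀ i : Fin 4, i + 2 ≠ i + 1) i)
    simp [edgeNormal, hij, dotZ] at this
  · exact (hA i j (Ne.symm hne) hj).ne (by rw [hij])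

lemma crossZ_edgeNormal_pos (hA : IsConvexQuadrilateral A) :
    0 < crossZ (edgeNormal A 0) (edgeNormal A 1) := by
  have h := hA 0 2 (by decide) (by decide)
  have : crossZ (edgeNormal A 0) (edgeNormal A 1) =
      dotZ (edgeNormal A 0) (A 0) - dotZ (edgeNormal A 0) (A 2) := by
    simp only [edgeNormal, dotZ, crossZ, Prod.fst_sub, Prod.snd_sub, zero_add, Fin.reduceAdd]
    ring
  omega

lemma eq_of_forall_dotZ_le (hA : IsConvexQuadrilateral A) {u s : ℤ × ℤ}
    (h : ∀ i, dotZ (edgeNormal A i) u ≤ dotZ (edgeNormal A i) s) : u = s := by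
  have hsum : ∀ v, ∑ i, dotZ (edgeNormal A i) v = 0 := by
    intro v
    simp only [Fin.sum_univ_four, edgeNormal, dotZ, Prod.fst_sub, Prod.snd_sub, zero_add,
      Fin.reduceAdd]
    ring
  have h0 := h 0; have h1 := h 1; have h2 := h 2; have h3 := h 3
  have hu := hsum u; have hs := hsum s
  simp only [Fin.sum_univ_four] at hu hs
  exact eq_of_dotZ_eq_of_crossZ_ne_zero (by linarith) (by linarith) hA.crossZ_edgeNormal_pos.ne'

end IsConvexQuadrilateral

/-- Along each edge only one of `s`, `t` moves; as no proper nonempty set of edges of a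
non-parallelogram sums to zero, one of them never moves. -/
lemma forall_eq_or_forall_eq_of_add_eq {A s t : Fin 4 → ℤ × ℤ} (hA : Function.Injective A)
    (hpar : A 0 + A 2 ≠ A 1 + A 3) (hst : ∀ i, s i + t i = A i)
    (hedge : ∀ i, s i = s (i + 1) ∨ t i = t (i + 1)) : (∀ i, s i = s 0) ∨ (∀ i, t i = t 0) := by
  have h01 := hA.ne (show (0 : Fin 4) ≠ 1 by decide)
  have h12 := hA.ne (show (1 : Fin 4) ≠ 2 by decide)
  have h23 := hA.ne (show (2 : Fin 4) ≠ 3 by decide)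
  have h30 := hA.ne (show (3 : Fin 4) ≠ 0 by decide)
  have h02 := hA.ne (show (0 : Fin 4) ≠ 2 by decide)
  have h13 := hA.ne (show (1 : Fin 4) ≠ 3 by decide)
  have e0 : s 0 = s 1 ∨ t 0 = t 1 := hedge 0
  have e1 : s 1 = s 2 ∨ t 1 = t 2 := hedge 1
  have e2 : s 2 = s 3 ∨ t 2 = t 3 := hedge 2
  have e3 : s 3 = s 0 ∨ t 3 = t 0 := hedge 3
  simp only [← hst] at h01 h12 h23 h30 h02 h13 hpar
  suffices (s 1 = s 0 ∧ s 2 = s 0 ∧ s 3 = s 0) ∨ (t 1 = t 0 ∧ t 2 = t 0 ∧ t 3 = t 0) by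
    refine this.imp ?_ ?_ <;> rintro ⟨h1, h2, h3⟩ i <;> fin_cases i <;> simp [*]
  generalize s 0 = s₀, s 1 = s₁, s 2 = s₂, s 3 = s₃, t 0 = t₀, t 1 = t₁, t 2 = t₂, t 3 = t₃ at *
  rcases e0 with rfl | rfl <;> rcases e1 with rfl | rfl <;> rcases e2 with rfl | rfl <;>
    rcases e3 with e3 | e3 <;> (try subst e3) <;> first | (exfalso; apply hpar; abel1) | simp_all

theorem IsConvexQuadrilateral.eq_singleton_or_eq_singleton {A : Fin 4 → ℤ × ℤ}
    (hA : IsConvexQuadrilateral A) (hprim : HasPrimitiveEdges A) (hpar : A 0 + A 2 ≠ A 1 + A 3)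
    {S T : Finset (ℤ × ℤ)} (hS : S.Nonempty) (hT : T.Nonempty)
    (hP : latticeHull S + latticeHull T = latticeHull (range A)) :
    (∃ s, S = {s}) ∨ (∃ t, T = {t}) := by
  rw [← latticeHull_add] at hP
  have hP' : latticeHull (↑T + ↑S) = latticeHull (range A) := by rwa [add_comm]
  choose s hs t ht hst using fun i =>
    exists_add_eq_of_forall_lt hS hT hP (mem_range_self i) (hA.dotZ_lt_of_ne i)
  have hts : ∀ i, t i + s i = A i := fun i => by rw [add_comm, hst]
  have hSmax (i : Fin 4) := isMaxOn_left_of_add_eq hP (ht i) (hst i) (hA.isMaxOn i)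
  have hSmax_pred (i : Fin 4) := isMaxOn_left_of_add_eq hP (ht i) (hst i) (hA.isMaxOn_pred i)
  have hTmax (i : Fin 4) := isMaxOn_left_of_add_eq hP' (hs i) (hts i) (hA.isMaxOn i)
  have hTmax_pred (i : Fin 4) := isMaxOn_left_of_add_eq hP' (hs i) (hts i) (hA.isMaxOn_pred i)
  have hedge : ∀ i, s i = s (i + 1) ∨ t i = t (i + 1) := by
    intro i
    obtain ⟨g, hg⟩ := hprim i
    have hn : dotZ (edgeNormal A i) (s (i + 1)) = dotZ (edgeNormal A i) (s i) := by
      have := hSmax_pred (i + 1)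
      rw [add_sub_cancel_right] at this
      exact le_antisymm (isMaxOn_iff.1 (hSmax i) _ (hs _)) (isMaxOn_iff.1 this _ (hs _))
    have := eq_zero_or_eq_zero_of_add_eq_primitive (δ := s (i + 1) - s i) (ε := t (i + 1) - t i)
      (by rw [← hst, ← hst]; abel) hg
      (by rw [← dotZ_edgeNormal_eq_crossZ, dotZ_sub_right, hn, sub_self])
      (hA.dotZ_edgeNormal_pred_lt i)
      (by rw [dotZ_sub_right, sub_nonpos]; exact isMaxOn_iff.1 (hSmax_pred i) _ (hs _))
      (by rw [dotZ_sub_right, sub_nonpos]; exact isMaxOn_iff.1 (hTmax_pred i) _ (ht _))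
    rcases this with h | h
    · exact Or.inl (sub_eq_zero.1 h).symm
    · exact Or.inr (sub_eq_zero.1 h).symm
  rcases forall_eq_or_forall_eq_of_add_eq hA.injective hpar hst hedge with hconst | hconst
  · refine Or.inl ⟨s 0, Finset.eq_singleton_iff_unique_mem.2 ⟨hs 0, fun u hu => ?_⟩⟩
    exact hA.eq_of_forall_dotZ_le fun i => hconst i ▸ isMaxOn_iff.1 (hSmax i) u hu
  · refine Or.inr ⟨t 0, Finset.eq_singleton_iff_unique_mem.2 ⟨ht 0, fun u hu => ?_⟩⟩
    exact hA.eq_of_forall_dotZ_le fun i => hconst i ▸ isMaxOn_iff.1 (hTmax i) u hu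

lemma not_isParallelogram_latticeHull {X : Set (ℤ × ℤ)}
    (hX : ∀ a ∈ X, ∀ b ∈ X, ∀ c ∈ X, ∀ d ∈ X, a ≠ b → a ≠ c → a ≠ d → b ≠ c → b ≠ d → c ≠ d →
      a + c ≠ b + d) :
    ¬ IsParallelogram (latticeHull X) := by
  rintro ⟨w, hw, hext, hsum⟩
  have hwX (i : Fin 4) : w i ∈ toR '' X := by
    apply extremePoints_convexHull_subset (𝕜 := ℝ)
    rw [← latticeHull, hext]
    exact mem_range_self i
  choose a haX ha using hwX
  have hne (i j : Fin 4) (hij : i ≠ j) : a i ≠ a j := fun h => hij (hw (by rw [← ha, ← ha, h]))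
  refine hX _ (haX 0) _ (haX 1) _ (haX 2) _ (haX 3) (hne 0 1 (by decide)) (hne 0 2 (by decide))
    (hne 0 3 (by decide)) (hne 1 2 (by decide)) (hne 1 3 (by decide)) (hne 2 3 (by decide))
    (toR_injective ?_)
  rw [toR_add, toR_add, ha, ha, ha, ha, hsum]

lemma IsLatticePolytope.add {A B : Set V} (hA : IsLatticePolytope A) (hB : IsLatticePolytope B) :
    IsLatticePolytope (A + B) := by
  obtain ⟨S, hS, rfl⟩ := hA
  obtain ⟨T, hT, rfl⟩ := hB
  exact ⟨S + T, hS.add hT, by rw [Finset.coe_add]; exact (latticeHull_add _ _).symm⟩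

lemma isLatticePolytope_zero : IsLatticePolytope 0 :=
  ⟨{0}, Finset.singleton_nonempty 0, by
    rw [Finset.coe_singleton, ← latticeHull, latticeHull_singleton,
      show toR 0 = 0 from map_zero toRAddHom, singleton_zero]⟩

lemma IsLatticePolytope.sum {ι : Type*} {s : Finset ι} {P : ι → Set V}
    (hP : ∀ i ∈ s, IsLatticePolytope (P i)) : IsLatticePolytope (∑ i ∈ s, P i) :=
  Finset.sum_induction _ _ (fun _ _ => IsLatticePolytope.add) isLatticePolytope_zero hP

lemma IsLatticePolytope.nonempty {A : Set V} (hA : IsLatticePolytope A) : A.Nonempty := by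
  obtain ⟨S, ⟨s, hs⟩, rfl⟩ := hA
  exact ⟨toR s, toR_mem_latticeHull hs⟩

lemma isLatticePolytope_of_segment_or_triangle {L : Set V}
    (hL : IsLatticeSegment L ∨ IsLatticeTriangle L) : IsLatticePolytope L := by
  rcases hL with ⟨a, b, -, rfl⟩ | ⟨a, b, c, -, rfl⟩
  · exact ⟨{a, b}, by simp, by simp [image_insert_eq, convexHull_pair]⟩
  · exact ⟨{a, b, c}, by simp, by simp [image_insert_eq]⟩

lemma nontrivial_of_segment_or_triangle {L : Set V}
    (hL : IsLatticeSegment L ∨ IsLatticeTriangle L) : L.Nontrivial := by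
  rcases hL with ⟨a, b, hab, rfl⟩ | ⟨a, b, c, hind, rfl⟩
  · exact nontrivial_of_mem_mem_ne (left_mem_segment ℝ _ _) (right_mem_segment ℝ _ _)
      (toR_injective.ne hab)
  · exact nontrivial_of_mem_mem_ne (subset_convexHull ℝ _ (mem_insert _ _))
      (subset_convexHull ℝ _ (mem_insert_of_mem _ (mem_insert _ _)))
      (by simpa using hind.injective.ne (show (0 : Fin 3) ≠ 1 by decide))

lemma HasLatticeMaximalDecomposition.exists_eq_add {P : Set V}
    (hP : HasLatticeMaximalDecomposition P) :
    ∃ A B, IsLatticePolytope A ∧ IsLatticePolytope B ∧ A.Nontrivial ∧ B.Nontrivial ∧ P = A + B := by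
  obtain ⟨m, Ps, hm, rfl, hPs⟩ := hP
  have hlat (k) := isLatticePolytope_of_segment_or_triangle (hPs k)
  have hnt (k) := nontrivial_of_segment_or_triangle (hPs k)
  have h1 : (⟨1, by omega⟩ : Fin (m + 1)) ∈ Finset.univ.erase 0 := by simp [Fin.ext_iff]
  refine ⟨Ps 0, ∑ k ∈ Finset.univ.erase 0, Ps k, hlat 0, IsLatticePolytope.sum fun k _ => hlat k,
    hnt 0, ?_, (Finset.add_sum_erase _ _ (Finset.mem_univ 0)).symm⟩
  rw [← Finset.add_sum_erase _ _ h1]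
  exact (hnt _).add_right (IsLatticePolytope.sum fun k _ => hlat k).nonempty

def gmswVertices (p q : ℤ) : Fin 4 → ℤ × ℤ := ![(0, 0), (1, 0), (p, p), (p - q - 1, p - q)]

lemma GMSW_eq_latticeHull (p q : ℤ) : GMSW p q = latticeHull (range (gmswVertices p q)) := by
  rw [GMSW, latticeHull]
  congr 2
  ext u
  simp only [gmswVertices, Matrix.range_cons, Matrix.range_empty, union_empty, singleton_union,
    mem_insert_iff, mem_singleton_iff]

lemma not_isParallelogram_GMSW {p q : ℤ} (hq : 0 < q) (hpq : q < p) :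
    ¬ IsParallelogram (GMSW p q) := by
  refine not_isParallelogram_latticeHull ?_
  simp only [mem_insert_iff, mem_singleton_iff]
  rintro a (rfl | rfl | rfl | rfl) b (rfl | rfl | rfl | rfl) c (rfl | rfl | rfl | rfl)
    d (rfl | rfl | rfl | rfl) <;> simp [Prod.ext_iff] <;> omega

lemma isConvexQuadrilateral_gmswVertices {p q : ℤ} (hq : 0 < q) (hpq : q < p) :
    IsConvexQuadrilateral (gmswVertices p q) := by
  intro i j hji hj
  fin_cases i <;> fin_cases j <;> simp_all [edgeNormal, dotZ, gmswVertices] <;> nlinarith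

lemma hasPrimitiveEdges_gmswVertices (p q : ℤ) : HasPrimitiveEdges (gmswVertices p q) := by
  intro i
  fin_cases i
  exacts [⟨(1, 0), by simp [dotZ, gmswVertices]⟩, ⟨(-1, 1), by simp [dotZ, gmswVertices]⟩,
    ⟨(-1, 1), by simp [dotZ, gmswVertices]; ring⟩, ⟨(1, -1), by simp [dotZ, gmswVertices]⟩]

lemma gmswVertices_add_ne {p q : ℤ} (hq : 0 < q) :
    gmswVertices p q 0 + gmswVertices p q 2 ≠ gmswVertices p q 1 + gmswVertices p q 3 := by
  simp [gmswVertices, Prod.ext_iff]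
  omega

lemma GMSW_summand_eq_singleton {p q : ℤ} (hq : 0 < q) (hpq : q < p) {A B : Set V}
    (hA : IsLatticePolytope A) (hB : IsLatticePolytope B) (hAB : GMSW p q = A + B) :
    (∃ x, A = {x}) ∨ (∃ x, B = {x}) := by
  obtain ⟨S, hS, rfl⟩ := hA
  obtain ⟨T, hT, rfl⟩ := hB
  rw [GMSW_eq_latticeHull] at hAB
  rcases (isConvexQuadrilateral_gmswVertices hq hpq).eq_singleton_or_eq_singleton
    (hasPrimitiveEdges_gmswVertices p q) (gmswVertices_add_ne hq) hS hT hAB.symm with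
    ⟨s, rfl⟩ | ⟨t, rfl⟩
  · exact Or.inl ⟨toR s, by rw [Finset.coe_singleton, ← latticeHull, latticeHull_singleton]⟩
  · exact Or.inr ⟨toR t, by rw [Finset.coe_singleton, ← latticeHull, latticeHull_singleton]⟩

/-- For `p > q > 0`, the toric diagram `𝒴^{p,q}` is not a parallelogram and
admits no Minkowski decomposition into two lattice polytopes neither of which is a single
point; in particular it admits no lattice maximal Minkowski decomposition. -/
theorem statement15 (p q : ℤ) (hq : 0 < q) (hpq : q < p) :
    ¬ IsParallelogram (GMSW p q) ∧
    (¬ ∃ A B : Set V, IsLatticePolytope A ∧ IsLatticePolytope B ∧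
        (¬ ∃ x, A = {x}) ∧ (¬ ∃ x, B = {x}) ∧ GMSW p q = A + B) ∧
    ¬ HasLatticeMaximalDecomposition (GMSW p q) := by
  refine ⟨not_isParallelogram_GMSW hq hpq, ?_, fun h => ?_⟩
  · rintro ⟨A, B, hA, hB, hA₁, hB₁, hAB⟩
    exact (GMSW_summand_eq_singleton hq hpq hA hB hAB).elim hA₁ hB₁
  · obtain ⟨A, B, hA, hB, hA₁, hB₁, hAB⟩ := h.exists_eq_add
    rcases GMSW_summand_eq_singleton hq hpq hA hB hAB with ⟨x, hx⟩ | ⟨x, hx⟩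
    exacts [hA₁.ne_singleton hx, hB₁.ne_singleton hx]
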